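/- In the twist-knot game TKNTK with an odd number n of twist precrossings, Ursula (who wins if the final resolution is unknotted) has a winning strategy as the second player. -/

import Mathlib

/-- The sign of a crossing resolution: `true ↦ +1`, `false ↦ -1`. -/
def sgn (b : Bool) : ℤ := if b then 1 else -1

/-- Sum of the signs of the `n` twist crossings (indices `0, …, n-1`). -/
def twistSum (n : ℕ) (f : Fin (n + 2) → Bool) : ℤ :=
  ∑ i : Fin n, sgn (f (Fin.castLE (by omega) i))

/-- A full resolution of the twist-knot shadow with `n` twist precrossings and two clasp
precrossings (indices `n` and `n+1`) is knotted iff the clasp signs agree and the twist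
sum either has absolute value `≥ 2` or equals the common clasp sign. -/
def Knotted (n : ℕ) (f : Fin (n + 2) → Bool) : Prop :=
  f ⟨n, by omega⟩ = f ⟨n + 1, by omega⟩ ∧
    (2 ≤ |twistSum n f| ∨ twistSum n f = sgn (f ⟨n, by omega⟩))

/-- Partial resolutions: each of the `k` crossings is unresolved (`none`) or carries a sign. -/
abbrev PartialRes (k : ℕ) := Fin k → Option Bool

/-- `Force A fuel moverIsForcer p` : with `fuel` moves remaining from position `p`, the
player whose winning condition on full resolutions is `A` can force the game (in which the
two players alternately pick a still-unresolved crossing and assign it a sign of their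
choice) to end in a full resolution satisfying `A`.  This backward-induction predicate is
equivalent to the existence of a winning strategy in the finite game. -/
def Force {k : ℕ} (A : (Fin k → Bool) → Prop) : ℕ → Bool → PartialRes k → Prop
  | 0, _, p => ∃ f : Fin k → Bool, (∀ i, p i = some (f i)) ∧ A f
  | m + 1, true, p => ∃ i, p i = none ∧ ∃ s : Bool,
      Force A m false (Function.update p i (some s))
  | m + 1, false, p => ∀ i, p i = none → ∀ s : Bool,
      Force A m true (Function.update p i (some s))

/-- The totally unresolved shadow. -/
def emptyRes (k : ℕ) : PartialRes k := fun _ => none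

/-!
Ursula answers Lear move by move. While both clasps are open she keeps the resolved twist
signs summing to zero: a twist of sign `s` is answered by another twist of sign `-s`. Since `n`
is odd, Lear is eventually the one to resolve the last twist, leaving twist sum `s` with both
clasps open; Ursula then sets one clasp to `-s`, and the clasp signs either differ or both
equal `-s ≠ s`. If Lear touches a clasp first, Ursula gives the other clasp the opposite sign.
-/

open Finset Function

section Game

variable {k : ℕ}

def unresolved (p : PartialRes k) : Finset (Fin k) := univ.filter (p · = none)

@[simp]
lemma mem_unresolved {p : PartialRes k} {i : Fin k} : i ∈ unresolved p ↔ p i = none := by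
  simp [unresolved]

lemma card_unresolved_update {p : PartialRes k} {i : Fin k} (hi : p i = none) (s : Bool) :
    #(unresolved (update p i (some s))) = #(unresolved p) - 1 := by
  have : unresolved (update p i (some s)) = (unresolved p).erase i := by
    ext j
    by_cases hj : j = i <;> simp [hj]
  rw [this, card_erase_of_mem (mem_unresolved.2 hi)]

def Extends (f : Fin k → Bool) (p : PartialRes k) : Prop :=
  ∀ i s, p i = some s → f i = s

lemma Extends.of_update {f : Fin k → Bool} {p : PartialRes k} {i : Fin k} {s : Bool}
    (hf : Extends f (update p i (some s))) (hi : p i = none) : Extends f p := by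
  intro j t hj
  have hji : j ≠ i := by rintro rfl; simp [hi] at hj
  exact hf j t (by rwa [update_of_ne hji])

lemma Extends.apply_update {f : Fin k → Bool} {p : PartialRes k} {i : Fin k} {s : Bool}
    (hf : Extends f (update p i (some s))) : f i = s :=
  hf i s (update_self ..)

theorem force_of_forall_extends {A : (Fin k → Bool) → Prop} {m : ℕ} {b : Bool}
    {p : PartialRes k} (hm : #(unresolved p) = m) (hA : ∀ f, Extends f p → A f) :
    Force A m b p := by
  induction m generalizing b p with
  | zero =>
    have hres : ∀ i, ∃ s, p i = some s := fun i =>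
      Option.ne_none_iff_exists'.1 fun hi =>
        notMem_empty i (card_eq_zero.1 hm ▸ mem_unresolved.2 hi)
    choose f hf using hres
    have hfp : Extends f p := fun i s hs => Option.some_injective _ ((hf i).symm.trans hs)
    cases b <;> exact ⟨f, hf, hA f hfp⟩
  | succ m ih =>
    cases b
    · intro i hi s
      exact ih (by rw [card_unresolved_update hi]; omega) fun f hf => hA f (hf.of_update hi)
    · obtain ⟨i, hi⟩ := card_pos.1 (by omega : 0 < #(unresolved p))
      rw [mem_unresolved] at hi
      exact ⟨i, hi, true,
        ih (by rw [card_unresolved_update hi]; omega) fun f hf => hA f (hf.of_update hi)⟩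

theorem force_true_of_reply {A : (Fin k → Bool) → Prop} {m : ℕ} {p : PartialRes k}
    {i : Fin k} (s : Bool) (hi : p i = none) (hm : #(unresolved p) = m + 1)
    (hA : ∀ f, Extends f (update p i (some s)) → A f) : Force A (m + 1) true p :=
  ⟨i, hi, s, force_of_forall_extends (by rw [card_unresolved_update hi]; omega) hA⟩

end Game

section TwistKnot

variable {n : ℕ}

def twist (n : ℕ) (i : Fin n) : Fin (n + 2) := Fin.castLE (by omega : n ≤ n + 2) i

def clasp₁ (n : ℕ) : Fin (n + 2) := ⟨n, by omega⟩

def clasp₂ (n : ℕ) : Fin (n + 2) := ⟨n + 1, by omega⟩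

lemma twist_injective : Injective (twist n) := Fin.castLE_injective (by omega)

lemma twist_ne_clasp₁ (i : Fin n) : twist n i ≠ clasp₁ n := by
  simp [twist, clasp₁, Fin.ext_iff, i.isLt.ne]

lemma twist_ne_clasp₂ (i : Fin n) : twist n i ≠ clasp₂ n := by
  simp [twist, clasp₂, Fin.ext_iff]; omega

lemma clasp₁_ne_clasp₂ : clasp₁ n ≠ clasp₂ n := by
  simp [clasp₁, clasp₂, Fin.ext_iff]

lemma eq_twist_or_clasp (i : Fin (n + 2)) :
    (∃ j, i = twist n j) ∨ i = clasp₁ n ∨ i = clasp₂ n := by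
  by_cases hi : i.val < n
  · exact Or.inl ⟨⟨i, hi⟩, rfl⟩
  · simp only [clasp₁, clasp₂, Fin.ext_iff]; omega

lemma not_knotted_of_clasp₁_ne_clasp₂ {f : Fin (n + 2) → Bool}
    (h : f (clasp₁ n) ≠ f (clasp₂ n)) : ¬Knotted n f :=
  fun hk => h hk.1

lemma not_knotted_of_twistSum_eq_sgn {f : Fin (n + 2) → Bool} {s : Bool}
    (hsum : twistSum n f = sgn s) (hc : f (clasp₁ n) = !s) : ¬Knotted n f := by
  rintro ⟨-, h | h⟩ <;> cases s <;> simp_all [sgn, clasp₁]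

def twistSigns (n : ℕ) (p : PartialRes (n + 2)) (i : Fin n) : ℤ := (p (twist n i)).elim 0 sgn

def partialTwistSum (n : ℕ) (p : PartialRes (n + 2)) : ℤ := ∑ i, twistSigns n p i

lemma partialTwistSum_update_of_ne {p : PartialRes (n + 2)} {j : Fin (n + 2)}
    (hj : ∀ i, twist n i ≠ j) (v : Option Bool) :
    partialTwistSum n (update p j v) = partialTwistSum n p := by
  simp only [partialTwistSum, twistSigns, update_of_ne (hj _)]

lemma partialTwistSum_update_twist {p : PartialRes (n + 2)} {i : Fin n}
    (hi : p (twist n i) = none) (s : Bool) :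
    partialTwistSum n (update p (twist n i) (some s)) = partialTwistSum n p + sgn s := by
  have hsigns :
      twistSigns n (update p (twist n i) (some s)) = update (twistSigns n p) i (sgn s) := by
    funext j
    by_cases hj : j = i
    · simp [twistSigns, hj]
    · simp [twistSigns, update_of_ne hj, update_of_ne (twist_injective.ne hj)]
  rw [partialTwistSum, hsigns, sum_update_of_mem (mem_univ i), partialTwistSum,
    ← add_sum_erase _ _ (mem_univ i), sdiff_singleton_eq_erase]
  simp [twistSigns, hi, add_comm]

lemma twistSum_eq_partialTwistSum {p : PartialRes (n + 2)} {f : Fin (n + 2) → Bool}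
    (hres : ∀ i, p (twist n i) ≠ none) (hf : Extends f p) :
    twistSum n f = partialTwistSum n p := by
  refine sum_congr rfl fun i _ => ?_
  obtain ⟨s, hs⟩ := Option.ne_none_iff_exists'.1 (hres i)
  change sgn (f (twist n i)) = (p (twist n i)).elim 0 sgn
  rw [hs, hf _ _ hs]
  rfl

theorem force_unknotted_after_clasp_move {p : PartialRes (n + 2)} {m : ℕ} {a b : Fin (n + 2)}
    (hab : a = clasp₁ n ∧ b = clasp₂ n ∨ a = clasp₂ n ∧ b = clasp₁ n) {s : Bool}
    (ha : p a = some s) (hb : p b = none) (hm : #(unresolved p) = m + 1) :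
    Force (fun f => ¬Knotted n f) (m + 1) true p :=
  force_true_of_reply (!s) hb hm fun f hf => by
    have hne : f a ≠ f b := by rw [hf.of_update hb a s ha, hf.apply_update]; simp
    rcases hab with ⟨rfl, rfl⟩ | ⟨rfl, rfl⟩
    exacts [not_knotted_of_clasp₁_ne_clasp₂ hne, not_knotted_of_clasp₁_ne_clasp₂ hne.symm]

theorem force_unknotted_of_twists_resolved {p : PartialRes (n + 2)} {m : ℕ} {s : Bool}
    (hres : ∀ i, p (twist n i) ≠ none) (hc : p (clasp₁ n) = none)
    (hsum : partialTwistSum n p = sgn s) (hm : #(unresolved p) = m + 1) :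
    Force (fun f => ¬Knotted n f) (m + 1) true p :=
  force_true_of_reply (!s) hc hm fun f hf => by
    refine not_knotted_of_twistSum_eq_sgn ?_ hf.apply_update
    rw [twistSum_eq_partialTwistSum (p := update p (clasp₁ n) (some !s))
      (fun i => by rw [update_of_ne (twist_ne_clasp₁ i)]; exact hres i) hf,
      partialTwistSum_update_of_ne twist_ne_clasp₁, hsum]

def IsBalanced (n : ℕ) (p : PartialRes (n + 2)) : Prop :=
  p (clasp₁ n) = none ∧ p (clasp₂ n) = none ∧ partialTwistSum n p = 0

theorem force_unknotted_of_balanced {m : ℕ} (hm : Odd m) {p : PartialRes (n + 2)}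
    (hcard : #(unresolved p) = m) (hp : IsBalanced n p) :
    Force (fun f => ¬Knotted n f) m false p := by
  induction m using Nat.strong_induction_on generalizing p with
  | _ m ih =>
  obtain ⟨hc₁, hc₂, hsum⟩ := hp
  have hclasps : {clasp₁ n, clasp₂ n} ⊆ unresolved p := by simp [insert_subset_iff, hc₁, hc₂]
  have h2m := hcard ▸ card_le_card hclasps
  rw [card_pair clasp₁_ne_clasp₂] at h2m
  obtain ⟨m, rfl⟩ : ∃ m', m = m' + 2 := ⟨m - 2, by omega⟩
  intro i hi s
  have hcard' : #(unresolved (update p i (some s))) = m + 1 := by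
    rw [card_unresolved_update hi]; omega
  rcases eq_twist_or_clasp i with ⟨i, rfl⟩ | rfl | rfl
  · set p' := update p (twist n i) (some s) with hp'
    have hc₁' : p' (clasp₁ n) = none := by rwa [hp', update_of_ne (twist_ne_clasp₁ i).symm]
    have hc₂' : p' (clasp₂ n) = none := by rwa [hp', update_of_ne (twist_ne_clasp₂ i).symm]
    have hsum' : partialTwistSum n p' = sgn s := by
      rw [partialTwistSum_update_twist hi, hsum, zero_add]
    by_cases hopen : ∃ j, p' (twist n j) = none
    · obtain ⟨j, hj⟩ := hopen
      refine ⟨twist n j, hj, !s, ih m (by omega) (by simpa [parity_simps] using hm)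
        (by rw [card_unresolved_update hj, hcard']; omega) ⟨?_, ?_, ?_⟩⟩
      · rwa [update_of_ne (twist_ne_clasp₁ j).symm]
      · rwa [update_of_ne (twist_ne_clasp₂ j).symm]
      · rw [partialTwistSum_update_twist hj, hsum']; cases s <;> rfl
    · push Not at hopen
      exact force_unknotted_of_twists_resolved hopen hc₁' hsum' hcard'
  · exact force_unknotted_after_clasp_move (.inl ⟨rfl, rfl⟩) (update_self ..)
      (by rwa [update_of_ne clasp₁_ne_clasp₂.symm]) hcard'
  · exact force_unknotted_after_clasp_move (.inr ⟨rfl, rfl⟩) (update_self ..)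
      (by rwa [update_of_ne clasp₁_ne_clasp₂]) hcard'

end TwistKnot

/-- TKNTK with an odd number `n` of twist precrossings:
Ursula (goal: unknotted) has a winning strategy moving second. -/
theorem tkntk_odd_ursula_second_wins (n : ℕ) (hn : Odd n) :
    Force (fun f => ¬ Knotted n f) (n + 2) false (emptyRes (n + 2)) :=
  force_unknotted_of_balanced (hn.add_even even_two) (by simp [unresolved, emptyRes])
    ⟨rfl, rfl, by simp [partialTwistSum, twistSigns, emptyRes]⟩
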